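/- Define a(n) = 2n+1 for n ≥ 0, and b(0) = −1 and b(n) = −n(n+1) for n ≥ 1. Then the convergents p(n)/q(n) of the continued fraction with partial quotients (a(n), b(n)) converge to the integral ∫₀^∞ e^{−t}/(1+t) dt as n → ∞; that is, ∫₀^∞ e^{−t}/(1+t) dt = 1 − 1/(3 − 1·2/(5 − 2·3/(7 − 3·4/(9 − ⋯)))). -/

import Mathlib

/-!
Let `L n = n! L_n^{(1)}`, where `L_n^{(1)}` is the generalized Laguerre polynomial, orthogonal for
the weight `t e^{-t}` on `(0, ∞)`, and let `S = ∫₀^∞ e^{-t}/(1+t) dt`. The error `p n - q n S`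
equals `E n = ∫₀^∞ t L_n(t) e^{-t}/(1+t) dt`: both satisfy the recurrence of the continued
fraction with the same initial values, because multiplying by `1 + t` cancels the denominator and
`t L_{n+1}(t)` integrates to zero against `e^{-t}`. Bounding `1/(1+t) ≤ 1` and applying
Cauchy–Schwarz for the weight `t e^{-t}` (of total mass 1) gives
`E n ^ 2 ≤ ∫₀^∞ t L_n(t)² e^{-t} dt = n! (n+1)!`, while `q n ≥ (n+1)!`, so
`(p n / q n - S)² ≤ 1 / (n+1)`.
-/

open Filter Topology
open MeasureTheory Real Set Polynomial
open scoped Nat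

lemma eq_of_two_step_recurrence {α : Type*} {u v : ℕ → α} (F : ℕ → α → α → α)
    (hu : ∀ n, u (n + 2) = F n (u (n + 1)) (u n)) (hv : ∀ n, v (n + 2) = F n (v (n + 1)) (v n))
    (h₀ : u 0 = v 0) (h₁ : u 1 = v 1) : u = v := by
  funext n
  induction n using Nat.twoStepInduction with
  | zero => exact h₀
  | one => exact h₁
  | more n ih₀ ih₁ => rw [hu, hv, ih₀, ih₁]

lemma factorial_succ_le_of_recurrence {q : ℕ → ℝ} (h₀ : 1 ≤ q 0) (h₁ : 2 * q 0 ≤ q 1)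
    (h : ∀ n : ℕ, q (n + 2) = (2 * n + 5) * q (n + 1) - (n + 1) * (n + 2) * q n) (n : ℕ) :
    ((n + 1)! : ℝ) ≤ q n := by
  suffices ∀ n : ℕ, ((n + 1)! : ℝ) ≤ q n ∧ (n + 2) * q n ≤ q (n + 1) from (this n).1
  intro n
  induction n with
  | zero => simpa using ⟨h₀, h₁⟩
  | succ m ih =>
    obtain ⟨ih₁, ih₂⟩ := ih
    have hqm : 0 < q m := lt_of_lt_of_le (by positivity) ih₁
    refine ⟨?_, ?_⟩
    · calc ((m + 1 + 1)! : ℝ) = (m + 2) * (m + 1)! := by push_cast [Nat.factorial_succ]; ring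
        _ ≤ (m + 2) * q m := by gcongr
        _ ≤ q (m + 1) := ih₂
    · rw [h m]; push_cast; nlinarith

lemma tendsto_zero_of_sq_le {ι : Type*} {l : Filter ι} {x y : ι → ℝ} (h : ∀ i, x i ^ 2 ≤ y i)
    (hy : Tendsto y l (𝓝 0)) : Tendsto x l (𝓝 0) := by
  have hy' := hy.sqrt
  rw [sqrt_zero] at hy'
  refine squeeze_zero_norm (fun i ↦ ?_) hy'
  rw [norm_eq_abs, ← sqrt_sq_eq_abs]
  exact sqrt_le_sqrt (h i)

section Gompertz

lemma integrableOn_pow_mul_exp_neg (k : ℕ) :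
    IntegrableOn (fun t : ℝ ↦ t ^ k * exp (-t)) (Ioi 0) := by
  refine (GammaIntegral_convergent (s := k + 1) (by positivity)).congr_fun (fun t _ ↦ ?_)
    measurableSet_Ioi
  simp only [add_sub_cancel_right, rpow_natCast, mul_comm]

lemma integral_pow_mul_exp_neg (k : ℕ) : ∫ t in Ioi (0 : ℝ), t ^ k * exp (-t) = k ! := by
  rw [← Gamma_nat_eq_factorial, Gamma_eq_integral (by positivity)]
  refine setIntegral_congr_fun measurableSet_Ioi (fun t _ ↦ ?_)
  simp only [add_sub_cancel_right, rpow_natCast, mul_comm]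

lemma integrableOn_eval_mul_exp_neg (P : ℝ[X]) :
    IntegrableOn (fun t ↦ P.eval t * exp (-t)) (Ioi 0) := by
  induction P using Polynomial.induction_on' with
  | add P Q hP hQ => simp only [eval_add, add_mul]; exact hP.add hQ
  | monomial k c =>
    simp only [eval_monomial, mul_assoc]; exact (integrableOn_pow_mul_exp_neg k).const_mul c

lemma integrableOn_eval_mul_exp_neg_div (P : ℝ[X]) :
    IntegrableOn (fun t ↦ P.eval t * (exp (-t) / (1 + t))) (Ioi 0) := by
  refine Integrable.mono (integrableOn_eval_mul_exp_neg P) ?_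
    ((ae_restrict_iff' measurableSet_Ioi).2 ?_)
  · exact (P.continuous.measurable.mul (by fun_prop)).aestronglyMeasurable
  · refine .of_forall fun t (ht : 0 < t) ↦ ?_
    rw [norm_mul, norm_mul, norm_div, norm_of_nonneg (by linarith : (0 : ℝ) ≤ 1 + t)]
    gcongr
    exact div_le_self (norm_nonneg _) (by linarith)

noncomputable def weightedIntegral (w : ℝ → ℝ)
    (hw : ∀ P : ℝ[X], IntegrableOn (fun t ↦ P.eval t * w t) (Ioi 0)) : ℝ[X] →ₗ[ℝ] ℝ where
  toFun P := ∫ t in Ioi 0, P.eval t * w t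
  map_add' P Q := by simp only [eval_add, add_mul]; exact integral_add (hw P) (hw Q)
  map_smul' c P := by simp only [eval_smul, smul_eq_mul, mul_assoc]; exact integral_const_mul c _

@[simp]
lemma weightedIntegral_apply (w : ℝ → ℝ)
    (hw : ∀ P : ℝ[X], IntegrableOn (fun t ↦ P.eval t * w t) (Ioi 0)) (P : ℝ[X]) :
    weightedIntegral w hw P = ∫ t in Ioi 0, P.eval t * w t := rfl

noncomputable def laguerreFunctional : ℝ[X] →ₗ[ℝ] ℝ :=
  weightedIntegral (fun t ↦ exp (-t)) integrableOn_eval_mul_exp_neg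

noncomputable def gompertzFunctional : ℝ[X] →ₗ[ℝ] ℝ :=
  weightedIntegral (fun t ↦ exp (-t) / (1 + t)) integrableOn_eval_mul_exp_neg_div

local notation "J" => laguerreFunctional
local notation "G" => gompertzFunctional

lemma laguerreFunctional_X_pow (k : ℕ) : J (X ^ k) = k ! := by
  simp [laguerreFunctional, integral_pow_mul_exp_neg]

lemma laguerreFunctional_one : J 1 = 1 := by
  simpa using laguerreFunctional_X_pow 0

lemma laguerreFunctional_X : J X = 1 := by
  simpa using laguerreFunctional_X_pow 1

lemma gompertzFunctional_one_add_X_mul (P : ℝ[X]) : G ((1 + X) * P) = J P := by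
  refine setIntegral_congr_fun measurableSet_Ioi fun t (ht : 0 < t) ↦ ?_
  have : 1 + t ≠ 0 := by positivity
  simp only [eval_mul, eval_add, eval_one, eval_X]
  field_simp

lemma abs_gompertzFunctional_le {P Q : ℝ[X]} (h : ∀ t > 0, |P.eval t| ≤ Q.eval t) :
    |G P| ≤ J Q := by
  simp only [gompertzFunctional, laguerreFunctional, weightedIntegral_apply, ← norm_eq_abs]
  refine norm_integral_le_of_norm_le (integrableOn_eval_mul_exp_neg Q)
    ((ae_restrict_iff' measurableSet_Ioi).2 (.of_forall fun t (ht : 0 < t) ↦ ?_))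
  rw [norm_mul, norm_div, norm_of_nonneg (exp_pos _).le,
    norm_of_nonneg (by linarith : (0 : ℝ) ≤ 1 + t)]
  calc ‖P.eval t‖ * (exp (-t) / (1 + t)) ≤ ‖P.eval t‖ * exp (-t) := by
        gcongr; exact div_le_self (exp_pos _).le (by linarith)
    _ ≤ Q.eval t * exp (-t) := by gcongr; exact h t ht

noncomputable def scaledLaguerre : ℕ → ℝ[X]
  | 0 => 1
  | 1 => C 2 - X
  | n + 2 => (C (2 * (n : ℝ) + 4) - X) * scaledLaguerre (n + 1)
      - C (((n : ℝ) + 1) * (n + 2)) * scaledLaguerre n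

local notation "L" => scaledLaguerre

lemma natDegree_scaledLaguerre_le (n : ℕ) : (L n).natDegree ≤ n := by
  induction n using Nat.twoStepInduction with
  | zero => simp [scaledLaguerre]
  | one => simp only [scaledLaguerre]; compute_degree
  | more n _ ih₁ =>
    have hlin : (C (2 * (n : ℝ) + 4) - X).natDegree ≤ 1 := by compute_degree
    rw [scaledLaguerre]
    refine (natDegree_sub_le _ _).trans (max_le ?_ ?_)
    · exact (natDegree_mul_le_of_le hlin ih₁).trans (by omega)
    · exact (natDegree_C_mul_le _ _).trans (by omega)

lemma coeff_scaledLaguerre_self (n : ℕ) : (L n).coeff n = (-1) ^ n := by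
  induction n using Nat.twoStepInduction with
  | zero => simp [scaledLaguerre]
  | one => simp [scaledLaguerre]
  | more n _ ih₁ =>
    have h₁ : (L (n + 1)).coeff (n + 2) = 0 :=
      coeff_eq_zero_of_natDegree_lt ((natDegree_scaledLaguerre_le _).trans_lt (by omega))
    have h₀ : (L n).coeff (n + 2) = 0 :=
      coeff_eq_zero_of_natDegree_lt ((natDegree_scaledLaguerre_le _).trans_lt (by omega))
    simp only [scaledLaguerre, sub_mul, coeff_sub, coeff_C_mul, coeff_X_mul, h₁, h₀, ih₁]
    ring

lemma laguerreFunctional_X_pow_succ_mul_scaledLaguerre (n k : ℕ) :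
    J (X ^ (k + 1) * L n) = (-1) ^ n * (k + 1)! * (descPochhammer ℝ n).eval (k : ℝ) := by
  induction n using Nat.twoStepInduction generalizing k with
  | zero => simp [scaledLaguerre, laguerreFunctional_X_pow]
  | one =>
    have : X ^ (k + 1) * L 1 = (2 : ℝ) • X ^ (k + 1) - X ^ (k + 2) := by
      simp only [scaledLaguerre, smul_eq_C_mul]; ring
    rw [this, map_sub, map_smul, laguerreFunctional_X_pow, laguerreFunctional_X_pow,
      Nat.factorial_succ (k + 1), descPochhammer_one, eval_X]
    push_cast
    ring
  | more n ih₀ ih₁ =>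
    have : X ^ (k + 1) * L (n + 2) = (2 * n + 4 : ℝ) • (X ^ (k + 1) * L (n + 1))
        - X ^ (k + 1 + 1) * L (n + 1) - ((n + 1) * (n + 2) : ℝ) • (X ^ (k + 1) * L n) := by
      simp only [scaledLaguerre, smul_eq_C_mul]; ring
    have hshift : (descPochhammer ℝ (n + 1)).eval ((k + 1 : ℕ) : ℝ)
        = (k + 1) * (descPochhammer ℝ n).eval (k : ℝ) := by
      simp [descPochhammer_succ_left, eval_comp]
    rw [this, map_sub, map_sub, map_smul, map_smul, ih₀, ih₁, ih₁, hshift,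
      Nat.factorial_succ (k + 1)]
    simp only [descPochhammer_succ_eval]
    push_cast
    ring

lemma laguerreFunctional_X_pow_succ_mul_scaledLaguerre_of_lt {n k : ℕ} (h : k < n) :
    J (X ^ (k + 1) * L n) = 0 := by
  rw [laguerreFunctional_X_pow_succ_mul_scaledLaguerre, descPochhammer_eval_coe_nat_of_lt h,
    mul_zero]

lemma laguerreFunctional_X_mul_scaledLaguerre_mul_self (n : ℕ) :
    J (X * L n * L n) = n ! * (n + 1)! := by
  have hL := as_sum_range' (L n) (n + 1) (Nat.lt_succ_of_le (natDegree_scaledLaguerre_le n))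
  have hsum : X * L n * L n = ∑ i ∈ Finset.range (n + 1), (L n).coeff i • (X ^ (i + 1) * L n) :=
    calc X * L n * L n = (∑ i ∈ Finset.range (n + 1), monomial i ((L n).coeff i)) * (X * L n) := by
          rw [← hL]; ring
      _ = _ := by
          rw [Finset.sum_mul]
          refine Finset.sum_congr rfl fun i _ ↦ ?_
          rw [← C_mul_X_pow_eq_monomial, smul_eq_C_mul]
          ring
  rw [hsum, map_sum, Finset.sum_range_succ, Finset.sum_eq_zero fun i hi ↦ by
    rw [map_smul, laguerreFunctional_X_pow_succ_mul_scaledLaguerre_of_lt (Finset.mem_range.1 hi),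
      smul_zero], zero_add, map_smul, laguerreFunctional_X_pow_succ_mul_scaledLaguerre,
    coeff_scaledLaguerre_self, descPochhammer_eval_eq_descFactorial, Nat.descFactorial_self,
    smul_eq_mul, ← mul_assoc, ← mul_assoc, ← pow_add, Even.neg_one_pow ⟨n, rfl⟩]
  ring

lemma gompertzFunctional_X : G X = 1 - G 1 := by
  have h := gompertzFunctional_one_add_X_mul 1
  rw [mul_one, map_add, laguerreFunctional_one] at h
  linarith

lemma gompertzFunctional_X_sq : G (X ^ 2) = G 1 := by
  have h := gompertzFunctional_one_add_X_mul X
  rw [add_mul, one_mul, ← sq, map_add, gompertzFunctional_X, laguerreFunctional_X] at h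
  linarith

lemma gompertzFunctional_X_mul_scaledLaguerre_zero : G (X * L 0) = 1 - G 1 := by
  rw [scaledLaguerre, mul_one, gompertzFunctional_X]

lemma gompertzFunctional_X_mul_scaledLaguerre_one : G (X * L 1) = 2 - 3 * G 1 := by
  have h : X * L 1 = (2 : ℝ) • X - X ^ 2 := by
    simp only [scaledLaguerre, smul_eq_C_mul]; ring
  rw [h, map_sub, map_smul, gompertzFunctional_X, gompertzFunctional_X_sq, smul_eq_mul]
  ring

lemma gompertzFunctional_X_mul_scaledLaguerre_add_two (n : ℕ) :
    G (X * L (n + 2)) = (2 * n + 5) * G (X * L (n + 1)) - (n + 1) * (n + 2) * G (X * L n) := by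
  have h : X * L (n + 2) = (2 * n + 5 : ℝ) • (X * L (n + 1)) - (1 + X) * (X * L (n + 1))
      - ((n + 1) * (n + 2) : ℝ) • (X * L n) := by
    simp only [scaledLaguerre, smul_eq_C_mul, map_add, map_mul, map_natCast, map_ofNat, map_one]
    ring
  rw [h, map_sub, map_sub, map_smul, map_smul, gompertzFunctional_one_add_X_mul, ← pow_one X,
    laguerreFunctional_X_pow_succ_mul_scaledLaguerre_of_lt n.succ_pos, smul_eq_mul, smul_eq_mul,
    sub_zero]

lemma sq_gompertzFunctional_X_mul_le (P : ℝ[X]) : G (X * P) ^ 2 ≤ J (X * P * P) := by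
  -- AM–GM `2 c |v| ≤ v ^ 2 + c ^ 2` with `c = |G (X * P)|`, weighted by `t e^{-t}` and integrated.
  set c := |G (X * P)|
  have hc : 0 ≤ c := abs_nonneg _
  have h : |G ((2 * c) • (X * P))| ≤ J (X * P * P + c ^ 2 • X) := by
    refine abs_gompertzFunctional_le fun t (ht : 0 < t) ↦ ?_
    simp only [eval_smul, eval_mul, eval_add, eval_X, smul_eq_mul, abs_mul, abs_of_pos ht,
      abs_of_nonneg hc, abs_two]
    nlinarith [mul_nonneg ht.le (sq_nonneg (|P.eval t| - c)), sq_abs (P.eval t)]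
  rw [map_smul, map_add, map_smul, smul_eq_mul, smul_eq_mul, abs_mul,
    abs_of_nonneg (by positivity), laguerreFunctional_X] at h
  nlinarith [sq_abs (G (X * P))]

lemma sq_gompertzFunctional_X_mul_scaledLaguerre_div_le {n : ℕ} {q : ℝ}
    (hq : ((n + 1)! : ℝ) ≤ q) :
    (G (X * L n) / q) ^ 2 ≤ 1 / (n + 1) :=
  calc (G (X * L n) / q) ^ 2 = G (X * L n) ^ 2 / q ^ 2 := div_pow _ _ _
    _ ≤ (n ! * (n + 1)!) / ((n + 1)! : ℝ) ^ 2 := by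
      rw [← laguerreFunctional_X_mul_scaledLaguerre_mul_self]
      gcongr
      · exact (sq_nonneg _).trans (sq_gompertzFunctional_X_mul_le _)
      · exact sq_gompertzFunctional_X_mul_le _
    _ = 1 / (n + 1) := by
      rw [Nat.factorial_succ]; push_cast; field_simp

end Gompertz

theorem stmt_3_general 
    (a b p q : ℕ → ℝ)
    (ha : ∀ n : ℕ, a n = 2 * (n : ℝ) + 1)
    (hb0 : b 0 = -1)
    (hb : ∀ n : ℕ, 1 ≤ n → b n = -((n : ℝ) * ((n : ℝ) + 1)))
    (hp0 : p 0 = a 0) (hq0 : q 0 = 1)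
    (hp1 : p 1 = a 0 * a 1 + b 0) (hq1 : q 1 = a 1)
    (hp : ∀ n : ℕ, p (n + 2) = a (n + 2) * p (n + 1) + b (n + 1) * p n)
    (hq : ∀ n : ℕ, q (n + 2) = a (n + 2) * q (n + 1) + b (n + 1) * q n) :
    Tendsto (fun n => p n / q n) atTop (𝓝 (∫ t in Set.Ioi (0 : ℝ), Real.exp (-t) / (1 + t))) := by
  set S := ∫ t in Set.Ioi (0 : ℝ), Real.exp (-t) / (1 + t)
  have hS : gompertzFunctional 1 = S := by simp [gompertzFunctional, S]
  have hab : ∀ (n : ℕ) (x y : ℝ),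
      a (n + 2) * x + b (n + 1) * y = (2 * n + 5) * x - (n + 1) * (n + 2) * y := by
    intro n x y; rw [ha, hb _ n.succ_pos]; push_cast; ring
  have ha1 : a 1 = 3 := by rw [ha]; norm_num
  have hq_ge (n : ℕ) : ((n + 1)! : ℝ) ≤ q n :=
    factorial_succ_le_of_recurrence (by rw [hq0]) (by rw [hq0, hq1, ha1]; norm_num)
      (fun n ↦ (hq n).trans (hab n _ _)) n
  have herr : (fun n ↦ p n - q n * S) = fun n ↦ gompertzFunctional (X * scaledLaguerre n) := by
    refine eq_of_two_step_recurrence (fun n x y ↦ (2 * n + 5) * x - (n + 1) * (n + 2) * y)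
      (fun n ↦ ?_) gompertzFunctional_X_mul_scaledLaguerre_add_two ?_ ?_
    · simp only [hp, hq, ← hab]; ring
    · rw [gompertzFunctional_X_mul_scaledLaguerre_zero, hS, hp0, hq0, ha]; ring
    · rw [gompertzFunctional_X_mul_scaledLaguerre_one, hS, hp1, hq1, ha1, hb0, ha]; ring
  have hlim :
      Tendsto (fun n ↦ S + gompertzFunctional (X * scaledLaguerre n) / q n) atTop (𝓝 S) := by
    simpa using tendsto_const_nhds.add (tendsto_zero_of_sq_le
      (fun n ↦ sq_gompertzFunctional_X_mul_scaledLaguerre_div_le (hq_ge n))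
      tendsto_one_div_add_atTop_nhds_zero_nat)
  refine hlim.congr fun n ↦ ?_
  have hqn : q n ≠ 0 := (lt_of_lt_of_le (by positivity) (hq_ge n)).ne'
  rw [← congrFun herr n]
  field_simp
  ring

theorem stmt_3 
    (a b p q : ℕ → ℝ)
    (ha0 : a 0 = 1)
    (ha : ∀ n : ℕ, a n = 2 * (n : ℝ) + 1)
    (hb0 : b 0 = -1)
    (hb : ∀ n : ℕ, 1 ≤ n → b n = -((n : ℝ) * ((n : ℝ) + 1)))
    (hp0 : p 0 = a 0) (hq0 : q 0 = 1)
    (hp1 : p 1 = a 0 * a 1 + b 0) (hq1 : q 1 = a 1)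
    (hp : ∀ n : ℕ, p (n + 2) = a (n + 2) * p (n + 1) + b (n + 1) * p n)
    (hq : ∀ n : ℕ, q (n + 2) = a (n + 2) * q (n + 1) + b (n + 1) * q n) :
    Tendsto (fun n => p n / q n) atTop (𝓝 (∫ t in Set.Ioi (0 : ℝ), Real.exp (-t) / (1 + t))) :=
  stmt_3_general a b p q ha hb0 hb hp0 hq0 hp1 hq1 hp hq
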